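/- Let σ ∈ ℝ^n have i.i.d. coordinates σ_i ~ Exp(η). Then E[‖σ‖_1] = n/η and for any two vectors s, s' ∈ ℝ^n, the total variation distance between the distributions of s + σ and s' + σ is at most η‖s − s'‖_1. -/

import Mathlib

open MeasureTheory ProbabilityTheory Finset
open Real
open scoped ENNReal

/-- Total variation distance between two measures. -/
noncomputable def tvDist {α : Type*} [MeasurableSpace α] (μ ν : Measure α) : ℝ :=
  ⨆ A : {A : Set α // MeasurableSet A}, |(μ A.1).toReal - (ν A.1).toReal|

-- pi_mono
lemma my_pi_mono {ι : Type*} [Fintype ι] {α : ι → Type*} [∀ i, MeasurableSpace (α i)]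
    {μ ν : ∀ i, Measure (α i)} (h : ∀ i, μ i ≤ ν i) : Measure.pi μ ≤ Measure.pi ν := by
  rw [Measure.le_iff]
  intro s hs
  rw [Measure.pi_def, Measure.pi_def, toMeasure_apply _ _ hs,
    toMeasure_apply _ _ hs]
  have : (OuterMeasure.pi fun i => (μ i).toOuterMeasure)
      ≤ OuterMeasure.pi fun i => (ν i).toOuterMeasure := by
    rw [OuterMeasure.pi, OuterMeasure.pi, OuterMeasure.le_boundedBy]
    intro t
    refine (OuterMeasure.boundedBy_le t).trans ?_
    exact Finset.prod_le_prod' fun i _ => Measure.le_iff'.mp (h i) _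
  exact this s

lemma my_pi_smul {ι : Type*} [Fintype ι] {α : ι → Type*} [∀ i, MeasurableSpace (α i)]
    {μ : ∀ i, Measure (α i)} [∀ i, IsFiniteMeasure (μ i)] (c : ι → ℝ≥0∞) (hc : ∀ i, c i ≤ 1) :
    Measure.pi (fun i => c i • μ i) = (∏ i, c i) • Measure.pi μ := by
  haveI : ∀ i, IsFiniteMeasure (c i • μ i) := fun i => by
    constructor
    rw [Measure.smul_apply, smul_eq_mul]
    calc c i * μ i Set.univ ≤ 1 * μ i Set.univ := by gcongr; exact hc i
    _ < ⊤ := by rw [one_mul]; exact measure_lt_top _ _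
  refine Measure.pi_eq fun s hs => ?_
  rw [Measure.smul_apply, smul_eq_mul, Measure.pi_pi]
  rw [← Finset.prod_mul_distrib]
  simp [Measure.smul_apply, smul_eq_mul]

lemma my_pdf_shift {η : ℝ} (hη : 0 < η) {a : ℝ} (ha : 0 ≤ a) (x : ℝ) :
    ENNReal.ofReal (rexp (-(η * a))) * exponentialPDF η x ≤ exponentialPDF η (x + a) := by
  rcases lt_or_ge x 0 with hx | hx
  · rw [exponentialPDF_of_neg hx]; simp
  · rw [exponentialPDF_of_nonneg hx, exponentialPDF_of_nonneg (by linarith),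
      ← ENNReal.ofReal_mul (exp_nonneg _)]
    apply ENNReal.ofReal_le_ofReal
    have : rexp (-(η * a)) * (η * rexp (-(η * x))) = η * rexp (-(η * (x + a))) := by
      rw [mul_left_comm, ← Real.exp_add]; ring_nf
    rw [this]

lemma my_measurable_expPDF (η : ℝ) : Measurable (exponentialPDF η) :=
  (measurable_exponentialPDFReal η).ennreal_ofReal

lemma my_map_shift_apply {η : ℝ} (a : ℝ) {S : Set ℝ} (hS : MeasurableSet S) :
    Measure.map (fun x => a + x) (expMeasure η) S
      = ∫⁻ y in S, exponentialPDF η (y - a) ∂volume := by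
  have hexp : expMeasure η = volume.withDensity (exponentialPDF η) := rfl
  rw [Measure.map_apply (measurable_const_add a) hS, hexp,
    withDensity_apply _ ((measurable_const_add a) hS)]
  have h1 : (∫⁻ y in S, exponentialPDF η (y - a) ∂volume)
      = ∫⁻ y in S, exponentialPDF η (y - a) ∂(Measure.map (· + a) volume) := by
    rw [map_add_right_eq_self volume a]
  have hg : Measurable fun y : ℝ => exponentialPDF η (y - a) :=
    (my_measurable_expPDF η).comp (measurable_sub_const a)
  rw [h1, setLIntegral_map hS hg (measurable_add_const a)]
  simp only [add_sub_cancel_right]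
  congr 1
  ext x
  simp [add_comm]

lemma my_onedim {η : ℝ} (hη : 0 < η) {a b : ℝ} (hab : a ≤ b) :
    ENNReal.ofReal (rexp (-(η * (b - a)))) • Measure.map (fun x => b + x) (expMeasure η)
      ≤ Measure.map (fun x => a + x) (expMeasure η) := by
  rw [Measure.le_iff]
  intro S hS
  have hg : Measurable fun y : ℝ => exponentialPDF η (y - b) :=
    (my_measurable_expPDF η).comp (measurable_sub_const b)
  rw [Measure.smul_apply, smul_eq_mul, my_map_shift_apply a hS, my_map_shift_apply b hS,
    ← lintegral_const_mul _ hg]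
  refine lintegral_mono fun y => ?_
  have := my_pdf_shift hη (sub_nonneg.mpr hab) (y - b)
  rwa [show y - b + (b - a) = y - a by ring] at this

lemma my_map_add_pi {n : ℕ} {η : ℝ} (hη : 0 < η) (u : Fin n → ℝ) :
    Measure.map (fun x => u + x) (Measure.pi fun _ : Fin n => expMeasure η)
      = Measure.pi (fun i => Measure.map (fun x => u i + x) (expMeasure η)) := by
  haveI : IsProbabilityMeasure (expMeasure η) := isProbabilityMeasure_expMeasure hη
  haveI : ∀ i : Fin n, IsProbabilityMeasure (Measure.map (fun x => u i + x) (expMeasure η)) :=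
    fun i => Measure.isProbabilityMeasure_map (measurable_const_add (u i)).aemeasurable
  have := (measurePreserving_pi (fun _ : Fin n => expMeasure η)
    (fun i => Measure.map (fun x => u i + x) (expMeasure η))
    (f := fun i x => u i + x) (fun i => ⟨measurable_const_add (u i), rfl⟩)).map_eq
  convert this using 2
  rfl

lemma my_dom {n : ℕ} {η : ℝ} (hη : 0 < η) {u m : Fin n → ℝ} (hm : ∀ i, m i ≤ u i) :
    ENNReal.ofReal (rexp (-(η * ∑ i, (u i - m i)))) •
        Measure.pi (fun i => Measure.map (fun x => u i + x) (expMeasure η))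
      ≤ Measure.pi (fun i => Measure.map (fun x => m i + x) (expMeasure η)) := by
  haveI : IsProbabilityMeasure (expMeasure η) := isProbabilityMeasure_expMeasure hη
  haveI : ∀ i : Fin n, IsProbabilityMeasure (Measure.map (fun x => u i + x) (expMeasure η)) :=
    fun i => Measure.isProbabilityMeasure_map (measurable_const_add (u i)).aemeasurable
  have hc : ENNReal.ofReal (rexp (-(η * ∑ i, (u i - m i))))
      = ∏ i, ENNReal.ofReal (rexp (-(η * (u i - m i)))) := by
    rw [← ENNReal.ofReal_prod_of_nonneg (fun i _ => exp_nonneg _), ← Real.exp_sum]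
    congr 1
    rw [Finset.mul_sum]
    simp
  rw [hc, ← my_pi_smul _ (fun i => ENNReal.ofReal_le_one.mpr (exp_le_one_iff.mpr
    (by nlinarith [hm i, hη.le] : -(η * (u i - m i)) ≤ 0)))]
  exact my_pi_mono fun i => my_onedim hη (hm i)

lemma my_tv_bound {α : Type*} [MeasurableSpace α] {μ ρ : Measure α}
    [IsProbabilityMeasure μ] [IsProbabilityMeasure ρ] {x : ℝ} (hx : 0 ≤ x)
    (h : ENNReal.ofReal (rexp (-x)) • μ ≤ ρ) {A : Set α} (hA : MeasurableSet A) :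
    |(μ A).toReal - (ρ A).toReal| ≤ x := by
  set c := rexp (-x) with hc
  have hc0 : 0 ≤ c := exp_nonneg _
  have hc1 : c ≤ 1 := exp_le_one_iff.mpr (by linarith)
  have hcx : 1 - c ≤ x := by
    have := Real.add_one_le_exp (-x)
    linarith
  have key : ∀ S : Set α, c * (μ S).toReal ≤ (ρ S).toReal := by
    intro S
    have h1 : ENNReal.ofReal c * μ S ≤ ρ S := by
      have := Measure.le_iff'.mp h S
      simpa [Measure.smul_apply, smul_eq_mul] using this
    have h2 := ENNReal.toReal_mono (measure_ne_top ρ S) h1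
    rwa [ENNReal.toReal_mul, ENNReal.toReal_ofReal hc0] at h2
  have hμc : (μ A).toReal + (μ Aᶜ).toReal = 1 := by
    rw [← ENNReal.toReal_add (measure_ne_top _ _) (measure_ne_top _ _),
      measure_add_measure_compl hA]
    simp
  have hρc : (ρ A).toReal + (ρ Aᶜ).toReal = 1 := by
    rw [← ENNReal.toReal_add (measure_ne_top _ _) (measure_ne_top _ _),
      measure_add_measure_compl hA]
    simp
  have h1 := key A
  have h2 := key Aᶜ
  have hp1 : (μ A).toReal ≤ 1 := by
    have := prob_le_one (μ := μ) (s := A)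
    exact (ENNReal.toReal_le_of_le_ofReal zero_le_one (by simpa using this))
  have hpc0 : 0 ≤ (μ Aᶜ).toReal := ENNReal.toReal_nonneg
  have hp0 : 0 ≤ (μ A).toReal := ENNReal.toReal_nonneg
  rw [abs_sub_le_iff]
  constructor
  · nlinarith
  · nlinarith

lemma my_joint {n : ℕ} {Ω : Type*} [MeasurableSpace Ω] (P : Measure Ω) [IsProbabilityMeasure P]
    {η : ℝ} (hη : 0 < η)
    (σ : Ω → Fin n → ℝ) (hmeas : ∀ i, Measurable (fun ω => σ ω i))
    (hlaw : ∀ i, Measure.map (fun ω => σ ω i) P = expMeasure η)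
    (hindep : iIndepFun (fun i ω => σ ω i) P) :
    Measure.map σ P = Measure.pi (fun _ : Fin n => expMeasure η) := by
  haveI : IsProbabilityMeasure (expMeasure η) := isProbabilityMeasure_expMeasure hη
  have hσ : Measurable σ := measurable_pi_iff.mpr hmeas
  refine (Measure.pi_eq fun t ht => ?_).symm
  rw [Measure.map_apply hσ (MeasurableSet.univ_pi ht)]
  have hpre : σ ⁻¹' (Set.pi Set.univ t) = ⋂ i ∈ Finset.univ, (fun ω => σ ω i) ⁻¹' (t i) := by
    ext ω; simp [Set.mem_pi]
  rw [hpre, hindep.measure_inter_preimage_eq_mul Finset.univ (fun i _ => ht i)]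
  refine Finset.prod_congr rfl fun i _ => ?_
  rw [← hlaw i, Measure.map_apply (hmeas i) (ht i)]

lemma my_intOn {η : ℝ} (hη : 0 < η) :
    IntegrableOn (fun x : ℝ => x * (η * rexp (-(η * x)))) (Set.Ioi 0) volume := by
  have h := integrableOn_rpow_mul_exp_neg_mul_rpow (by norm_num : (-1:ℝ) < 1) one_pos hη
  simp only [Real.rpow_one] at h
  have h2 : IntegrableOn (fun x : ℝ => η * (x * rexp (-η * x))) (Set.Ioi 0) volume :=
    h.const_mul η
  refine h2.congr_fun (fun x _ => by ring) measurableSet_Ioi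

lemma my_mean_Ioi {η : ℝ} (hη : 0 < η) :
    ∫ x in Set.Ioi 0, x * (η * rexp (-(η * x))) = 1 / η := by
  have h1 : (∫ x in Set.Ioi 0, x * (η * rexp (-(η * x))))
      = η * ∫ x in Set.Ioi 0, x ^ ((2:ℝ) - 1) * rexp (-(η * x)) := by
    rw [← integral_const_mul]
    refine setIntegral_congr_fun measurableSet_Ioi (fun x _ => ?_)
    rw [show (2:ℝ) - 1 = 1 by norm_num, Real.rpow_one]
    ring
  rw [h1, Real.integral_rpow_mul_exp_neg_mul_Ioi (by norm_num) hη]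
  have hG : Real.Gamma 2 = 1 := by
    rw [show (2:ℝ) = (1:ℕ) + 1 by norm_num, Real.Gamma_nat_eq_factorial]
    simp
  rw [hG, show ((2:ℝ)) = ((2:ℕ):ℝ) by norm_num, Real.rpow_natCast]
  field_simp

lemma my_g_eq {η : ℝ} (hη : 0 < η) (x : ℝ) :
    exponentialPDF η x * ENNReal.ofReal |x|
      = ENNReal.ofReal (Set.indicator (Set.Ici 0) (fun x => x * (η * rexp (-(η * x)))) x) := by
  rcases lt_or_ge x 0 with hx | hx
  · rw [exponentialPDF_of_neg hx, Set.indicator_of_notMem (by simpa using hx)]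
    simp
  · rw [exponentialPDF_of_nonneg hx, Set.indicator_of_mem (by simpa using hx), abs_of_nonneg hx,
      ← ENNReal.ofReal_mul (by positivity)]
    ring_nf

lemma my_g_integrable {η : ℝ} (hη : 0 < η) :
    Integrable (Set.indicator (Set.Ici 0) (fun x : ℝ => x * (η * rexp (-(η * x))))) volume := by
  rw [integrable_indicator_iff measurableSet_Ici, integrableOn_Ici_iff_integrableOn_Ioi]
  exact my_intOn hη

lemma my_g_integral {η : ℝ} (hη : 0 < η) :
    ∫ x, Set.indicator (Set.Ici 0) (fun x : ℝ => x * (η * rexp (-(η * x)))) x = 1 / η := by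
  rw [integral_indicator measurableSet_Ici, integral_Ici_eq_integral_Ioi]
  exact my_mean_Ioi hη

lemma my_abs_lintegral {η : ℝ} (hη : 0 < η) :
    ∫⁻ x, ENNReal.ofReal |x| ∂(expMeasure η) = ENNReal.ofReal (1 / η) := by
  have hexp : expMeasure η = volume.withDensity (exponentialPDF η) := rfl
  rw [hexp, lintegral_withDensity_eq_lintegral_mul _ (my_measurable_expPDF η)
    (measurable_abs.ennreal_ofReal)]
  have : ∀ x : ℝ, (exponentialPDF η * fun x => ENNReal.ofReal |x|) x
      = ENNReal.ofReal (Set.indicator (Set.Ici 0) (fun x => x * (η * rexp (-(η * x)))) x) :=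
    fun x => my_g_eq hη x
  rw [lintegral_congr this, ← ofReal_integral_eq_lintegral_ofReal (my_g_integrable hη)
    (Filter.Eventually.of_forall fun x => Set.indicator_nonneg (fun y hy => by
      have : (0:ℝ) ≤ y := hy
      positivity) x), my_g_integral hη]

lemma my_abs_integrable {η : ℝ} (hη : 0 < η) : Integrable (fun x : ℝ => |x|) (expMeasure η) := by
  refine ⟨(measurable_abs).aestronglyMeasurable, ?_⟩
  rw [hasFiniteIntegral_iff_norm]
  have : ∀ x : ℝ, ENNReal.ofReal ‖|x|‖ = ENNReal.ofReal |x| := fun x => by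
    rw [Real.norm_eq_abs, abs_abs]
  rw [lintegral_congr this, my_abs_lintegral hη]
  exact ENNReal.ofReal_lt_top

lemma my_abs_integral {η : ℝ} (hη : 0 < η) : ∫ x, |x| ∂(expMeasure η) = 1 / η := by
  rw [integral_eq_lintegral_of_nonneg_ae (Filter.Eventually.of_forall fun x => abs_nonneg x)
    (measurable_abs).aestronglyMeasurable, my_abs_lintegral hη,
    ENNReal.toReal_ofReal (by positivity)]


/-- For `σ` with i.i.d. coordinates `σ_i ~ Exp(η)`: `E[‖σ‖₁] = n/η`, and the total
variation distance between the laws of `s + σ` and `s' + σ` is at most `η ‖s − s'‖₁`. -/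
theorem exponential_perturbation_stability {n : ℕ}
    {Ω : Type*} [MeasurableSpace Ω] (P : Measure Ω) [IsProbabilityMeasure P]
    (η : ℝ) (hη : 0 < η)
    (σ : Ω → Fin n → ℝ) (hmeas : ∀ i, Measurable (fun ω => σ ω i))
    (hlaw : ∀ i, Measure.map (fun ω => σ ω i) P = expMeasure η)
    (hindep : iIndepFun (fun i ω => σ ω i) P)
    (s s' : Fin n → ℝ) :
    (∫ ω, ∑ i, |σ ω i| ∂P) = n / η ∧
    tvDist (Measure.map (fun ω => s + σ ω) P) (Measure.map (fun ω => s' + σ ω) P)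
      ≤ η * ∑ i, |s i - s' i| := by
  haveI : IsProbabilityMeasure (expMeasure η) := isProbabilityMeasure_expMeasure hη
  have hσ : Measurable σ := measurable_pi_iff.mpr hmeas
  constructor
  · -- expectation part
    have int_i : ∀ i, Integrable (fun ω => |σ ω i|) P := by
      intro i
      have h := my_abs_integrable hη
      rw [← hlaw i] at h
      exact (integrable_map_measure measurable_abs.aestronglyMeasurable
        (hmeas i).aemeasurable).mp h
    have val_i : ∀ i, ∫ ω, |σ ω i| ∂P = 1 / η := by
      intro i
      have h := integral_map (μ := P) (φ := fun ω => σ ω i) (hmeas i).aemeasurable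
        (measurable_abs.aestronglyMeasurable (μ := Measure.map (fun ω => σ ω i) P))
      rw [hlaw i, my_abs_integral hη] at h
      exact h.symm
    rw [integral_finset_sum Finset.univ (fun i _ => int_i i)]
    simp only [val_i, Finset.sum_const, Finset.card_univ, Fintype.card_fin, nsmul_eq_mul]
    rw [mul_one_div]
  · -- TV part
    have hjoint := my_joint P hη σ hmeas hlaw hindep
    have hadd : ∀ u : Fin n → ℝ, Measurable (fun x : Fin n → ℝ => u + x) := fun u =>
      measurable_pi_iff.mpr fun i => by simpa only [Pi.add_apply] using (measurable_pi_apply i : Measurable fun x : Fin n → ℝ => x i).const_add (u i)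
    have hlaw2 : ∀ u : Fin n → ℝ, Measure.map (fun ω => u + σ ω) P
        = Measure.pi (fun i => Measure.map (fun x => u i + x) (expMeasure η)) := by
      intro u
      rw [← my_map_add_pi hη u, ← hjoint, Measure.map_map (hadd u) hσ]
      rfl
    set m : Fin n → ℝ := fun i => min (s i) (s' i) with hm
    haveI hprob : ∀ (u : Fin n → ℝ) (i : Fin n),
        IsProbabilityMeasure (Measure.map (fun x => u i + x) (expMeasure η)) :=
      fun u i => Measure.isProbabilityMeasure_map (measurable_const_add (u i)).aemeasurable
    haveI : ∀ u : Fin n → ℝ, IsProbabilityMeasure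
        (Measure.pi (fun i => Measure.map (fun x => u i + x) (expMeasure η))) := by
      intro u
      haveI := hprob u
      infer_instance
    have hx1 : (0:ℝ) ≤ η * ∑ i, (s i - m i) :=
      mul_nonneg hη.le (Finset.sum_nonneg fun i _ => sub_nonneg.mpr (min_le_left _ _))
    have hx2 : (0:ℝ) ≤ η * ∑ i, (s' i - m i) :=
      mul_nonneg hη.le (Finset.sum_nonneg fun i _ => sub_nonneg.mpr (min_le_right _ _))
    have hsum : η * ∑ i, (s i - m i) + η * ∑ i, (s' i - m i) = η * ∑ i, |s i - s' i| := by
      rw [← mul_add, ← Finset.sum_add_distrib]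
      congr 1
      refine Finset.sum_congr rfl fun i _ => ?_
      rcases le_total (s i) (s' i) with h | h
      · rw [hm]; simp only [min_eq_left h]
        rw [abs_of_nonpos (by linarith)]; ring
      · rw [hm]; simp only [min_eq_right h]
        rw [abs_of_nonneg (by linarith)]; ring
    rw [hlaw2 s, hlaw2 s']
    refine Real.iSup_le ?_ (by positivity)
    rintro ⟨A, hA⟩
    have h1 := my_tv_bound hx1 (my_dom hη (fun i => min_le_left (s i) (s' i))) hA
    have h2 := my_tv_bound hx2 (my_dom hη (fun i => min_le_right (s i) (s' i))) hA
    calc |((Measure.pi fun i => Measure.map (fun x => s i + x) (expMeasure η)) A).toReal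
          - ((Measure.pi fun i => Measure.map (fun x => s' i + x) (expMeasure η)) A).toReal|
        ≤ |((Measure.pi fun i => Measure.map (fun x => s i + x) (expMeasure η)) A).toReal
          - ((Measure.pi fun i => Measure.map (fun x => m i + x) (expMeasure η)) A).toReal|
          + |((Measure.pi fun i => Measure.map (fun x => m i + x) (expMeasure η)) A).toReal
          - ((Measure.pi fun i => Measure.map (fun x => s' i + x) (expMeasure η)) A).toReal| :=
        abs_sub_le _ _ _
      _ ≤ η * ∑ i, (s i - m i) + η * ∑ i, (s' i - m i) := by
          refine add_le_add h1 ?_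
          rw [abs_sub_comm]
          exact h2
      _ = η * ∑ i, |s i - s' i| := hsum
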